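/- Let p be an odd prime, let r ≥ 2, and let G be an extraspecial p-group of order p^{1+2r} and exponent p^2. Then there exist subgroups H and C of G such that H has order p^{2r-1} and exponent p^2, C has order p, H ∩ C = 1, every element of H commutes with every element of C, and the subgroup H·C generated by H and C has index p in G. -/

import Mathlib

/-!
Since `G' = Φ(G) = Z(G)` has order `p`, commutators and `p`-th powers are central, and for
each `t` the map `g ↦ ⁅t, g⁆` is a homomorphism `G → Z(G)` with kernel `C(t)`. Hence the
centralizer of a non-central element has index `p`, and `C(a) ≤ C(c)` forces `c ∈ ⟨a⟩ Z(G)`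
(the commutator pairing on `G / Z(G)` is nondegenerate). Take `a` of order `p²`, so that
`Z(G) = ⟨a^p⟩`. As `|C(a)| = p^{2r} > p²`, some `c₀ ∈ C(a)` lies outside `⟨a⟩`, and
multiplying it by a power of `a` gives an element `c` of order `p`. Then `C(a) ≰ C(c)`, so
some `d ∈ C(a)` does not commute with `c`. Now `H = C(d) ∩ C(c)` has index `p` in `C(c)`,
contains `a`, misses `c`, and `H ⟨c⟩ = C(c)`.
-/

open Subgroup
open scoped commutatorElement

namespace Subgroup

variable {G : Type*} [Group G]

theorem mem_centralizer_singleton_comm {a b : G} :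
    a ∈ centralizer {b} ↔ b ∈ centralizer {a} := by
  simp only [mem_centralizer_singleton_iff, eq_comm]

theorem eq_of_relIndex_prime {H J K : Subgroup G} (hHJ : H ≤ J) (hJK : J ≤ K)
    (hp : (H.relIndex K).Prime) (hJH : ¬J ≤ H) : J = K := by
  rw [← relIndex_mul_relIndex H J K hHJ hJK, Nat.prime_mul_iff] at hp
  rcases hp with ⟨-, h⟩ | ⟨-, h⟩
  · exact le_antisymm hJK (relIndex_eq_one.mp h)
  · exact absurd (relIndex_eq_one.mp h) hJH

theorem relIndex_eq_index_of_index_prime {H K : Subgroup G} [H.Normal]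
    (hH : H.index.Prime) (hKH : ¬K ≤ H) : H.relIndex K = H.index :=
  ((Nat.dvd_prime hH).mp (relIndex_dvd_index_of_normal H K)).resolve_left
    (mt relIndex_eq_one.mp hKH)

theorem zpowers_eq_of_card_prime {H : Subgroup G} {z : G} (hH : (Nat.card H).Prime)
    (hz : z ∈ H) (hz1 : z ≠ 1) : zpowers z = H := by
  have : Finite H := Nat.finite_of_card_ne_zero hH.ne_zero
  have hle : zpowers z ≤ H := zpowers_le.mpr hz
  refine eq_of_le_of_card_ge hle
    (((Nat.dvd_prime hH).mp (card_dvd_of_le hle)).resolve_left ?_).ge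
  rwa [card_eq_one, zpowers_eq_bot]

theorem inf_zpowers_eq_bot {H : Subgroup G} {c : G} (hc : (orderOf c).Prime) (hcH : c ∉ H) :
    H ⊓ zpowers c = ⊥ := by
  refine eq_bot_iff.mpr fun x hx => mem_bot.mpr <| by_contra fun hx1 => hcH ?_
  rw [← Nat.card_zpowers] at hc
  rw [← zpowers_le, ← zpowers_eq_of_card_prime hc hx.2 hx1, zpowers_le]
  exact hx.1

theorem exponent_eq_of_orderOf_eq {H : Subgroup G} {a : G} (ha : a ∈ H)
    (hord : orderOf a = Monoid.exponent G) : Monoid.exponent H = Monoid.exponent G :=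
  Nat.dvd_antisymm (Monoid.exponent_dvd_of_monoidHom H.subtype H.subtype_injective)
    (hord ▸ orderOf_mk a ha ▸ Monoid.order_dvd_exponent _)

theorem exists_mem_centralizer_pow_eq_one {p : ℕ} {a c₀ : G} (hc₀ : c₀ ∈ centralizer {a})
    (hc₀a : c₀ ∉ zpowers a) (hc₀p : c₀ ^ p ∈ zpowers (a ^ p)) :
    ∃ c ∈ centralizer {a}, c ^ p = 1 ∧ c ∉ zpowers a := by
  obtain ⟨k, hk⟩ := mem_zpowers_iff.mp hc₀p
  have hcomm : Commute c₀ (a ^ (-k)) :=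
    Commute.zpow_right (mem_centralizer_singleton_iff.mp hc₀) _
  refine ⟨c₀ * a ^ (-k), mul_mem hc₀ (zpow_mem (mem_centralizer_singleton_iff.mpr rfl) _), ?_,
    fun h => hc₀a ?_⟩
  · rw [hcomm.mul_pow, ← hk]
    group
  · simpa using mul_mem h (zpow_mem (mem_zpowers a) k)

end Subgroup

theorem Monoid.exists_orderOf_eq_prime_pow {G : Type*} [Monoid G] {p n : ℕ} (hp : p.Prime)
    (hexp : Monoid.exponent G = p ^ n) : ∃ a : G, orderOf a = p ^ n := by
  simpa [hexp, hp.factorization_self] using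
    hp.exists_orderOf_eq_pow_factorization_exponent (G := G)

namespace IsPGroup

variable {p : ℕ} [hp : Fact p.Prime] {G : Type*} [Group G] [Finite G]

theorem index_eq_of_isCoatom (hG : IsPGroup p G) {M : Subgroup G} (hM : IsCoatom M) :
    M.index = p := by
  obtain ⟨n, hn⟩ := (hG.to_subgroup M).exists_card_eq
  obtain ⟨j, hj⟩ := hG.index M
  have hj0 : j ≠ 0 := by
    rintro rfl
    exact hM.1 (index_eq_one.mp (hj.trans (pow_zero p)))
  have hdvd : p ^ (n + 1) ∣ Nat.card G := by
    rw [← card_mul_index M, hn, hj, pow_succ]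
    exact mul_dvd_mul_left _ (dvd_pow_self p hj0)
  obtain ⟨K, hK, hMK⟩ := Sylow.exists_subgroup_card_pow_succ hdvd hn
  have hMK' : M ≠ K := by
    rintro rfl
    exact absurd (hn.symm.trans hK) ((Nat.pow_right_injective hp.out.two_le).ne (by omega))
  have hKtop : K = ⊤ := hM.2 K (lt_of_le_of_ne hMK hMK')
  have hcard := card_mul_index M
  rw [hn, ← card_top, ← hKtop, hK, pow_succ] at hcard
  exact Nat.eq_of_mul_eq_mul_left (pow_pos hp.out.pos n) hcard

theorem pow_mem_frattini (hG : IsPGroup p G) (g : G) : g ^ p ∈ frattini G := by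
  have : Group.IsNilpotent G := hG.isNilpotent
  simp only [frattini, Order.radical, mem_iInf]
  intro M hM
  have : M.Normal :=
    NormalizerCondition.normal_of_coatom M Group.normalizerCondition_of_isNilpotent hM
  exact hG.index_eq_of_isCoatom hM ▸ M.pow_index_mem g

end IsPGroup

section CentralCommutators

variable {G : Type*} [Group G]

def centralCommutatorHom (hG : ∀ x y : G, ⁅x, y⁆ ∈ center G) (t : G) : G →* center G where
  toFun g := ⟨⁅t, g⁆, hG t g⟩
  map_one' := Subtype.ext (commutatorElement_one_right t)
  map_mul' x y := Subtype.ext <| show ⁅t, x * y⁆ = ⁅t, x⁆ * ⁅t, y⁆ by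
    rw [commutatorElement_mul_right_eq_mul_conj, mul_assoc _ x, mem_center_iff.mp (hG t y) x,
      mul_assoc, mul_inv_cancel_right]

theorem ker_centralCommutatorHom (hG : ∀ x y : G, ⁅x, y⁆ ∈ center G) (t : G) :
    (centralCommutatorHom hG t).ker = centralizer {t} := by
  ext g
  rw [MonoidHom.mem_ker, ← Subtype.coe_inj, mem_centralizer_singleton_iff]
  exact commutatorElement_eq_one_iff_mul_comm.trans eq_comm

theorem normal_centralizer_singleton (hG : ∀ x y : G, ⁅x, y⁆ ∈ center G) (t : G) :
    (centralizer {t}).Normal :=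
  ker_centralCommutatorHom hG t ▸ MonoidHom.normal_ker _

variable {p : ℕ} [Fact p.Prime]

theorem index_centralizer_singleton (hG : ∀ x y : G, ⁅x, y⁆ ∈ center G)
    (hZ : Nat.card (center G) = p) {t : G} (ht : t ∉ center G) :
    (centralizer {t}).index = p := by
  have hne : (centralizer {t}).index ≠ 1 := by
    rwa [Ne, index_eq_one, centralizer_eq_top_iff_subset, Set.singleton_subset_iff]
  rw [← ker_centralCommutatorHom hG, index_ker] at hne ⊢
  exact ((Nat.dvd_prime Fact.out).mp (hZ ▸ card_subgroup_dvd_card _)).resolve_left hne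

theorem relIndex_centralizer_singleton (hG : ∀ x y : G, ⁅x, y⁆ ∈ center G)
    (hZ : Nat.card (center G) = p) {d : G} {K : Subgroup G} (hK : ¬K ≤ centralizer {d}) :
    (centralizer {d}).relIndex K = p := by
  have hd : d ∉ center G := fun hd =>
    hK ((centralizer_eq_top_iff_subset.mpr (Set.singleton_subset_iff.mpr hd)).symm ▸ le_top)
  have := normal_centralizer_singleton hG d
  rw [relIndex_eq_index_of_index_prime
      (by rw [index_centralizer_singleton hG hZ hd]; exact Fact.out) hK,
    index_centralizer_singleton hG hZ hd]

theorem mem_zpowers_sup_center_of_centralizer_le (hG : ∀ x y : G, ⁅x, y⁆ ∈ center G)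
    (hZ : Nat.card (center G) = p) {a c : G} (ha : a ∉ center G)
    (hac : centralizer {a} ≤ centralizer {c}) : c ∈ zpowers a ⊔ center G := by
  obtain ⟨t, hta⟩ : ∃ t, t ∉ centralizer {a} := by
    by_contra! h
    exact ha (centralizer_eq_top_iff_subset.mp (eq_top_iff' _ |>.mpr h) rfl)
  set f := centralCommutatorHom hG t
  have hfa : f a ≠ 1 := by
    rwa [Ne, ← MonoidHom.mem_ker, ker_centralCommutatorHom, mem_centralizer_singleton_comm]
  obtain ⟨k, hk⟩ := mem_zpowers_iff.mp (zpowers_eq_top_of_prime_card hZ hfa ▸ mem_top (f c))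
  set u := a ^ (-k) * c
  -- `u` commutes with `C(a)` and with `t ∉ C(a)`, and `C(a)` is maximal.
  have hu : centralizer {u} = ⊤ := by
    refine eq_of_relIndex_prime (H := centralizer {a}) (fun g hg => ?_) le_top
      (by rw [relIndex_top_right, index_centralizer_singleton hG hZ ha]; exact Fact.out) ?_
    · rw [mem_centralizer_singleton_comm] at hg ⊢
      exact mul_mem (zpow_mem hg _)
        (mem_centralizer_singleton_comm.mp (hac (mem_centralizer_singleton_comm.mpr hg)))
    · refine fun h => hta (h ?_)
      rw [mem_centralizer_singleton_comm, ← ker_centralCommutatorHom hG, MonoidHom.mem_ker,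
        map_mul, map_zpow, ← hk, zpow_neg, inv_mul_cancel]
  have hc : c = a ^ k * u := by simp [u]
  exact hc ▸ mul_mem (mem_sup_left (zpow_mem (mem_zpowers a) k))
    (mem_sup_right (centralizer_eq_top_iff_subset.mp hu rfl))

theorem exists_noncommuting_pair_mem_centralizer [Finite G]
    (hG : ∀ x y : G, ⁅x, y⁆ ∈ center G) (hZ : Nat.card (center G) = p)
    (hpow : ∀ x : G, x ^ p ∈ center G) {a : G} (ha : orderOf a = p ^ 2)
    (hcard : p ^ 3 < Nat.card G) :
    ∃ c d : G, c ∈ centralizer {a} ∧ c ^ p = 1 ∧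
      d ∈ centralizer {a} ∧ d ∉ centralizer {c} := by
  have hp : p.Prime := Fact.out
  have hap : a ^ p ≠ 1 :=
    pow_ne_one_of_lt_orderOf hp.ne_zero (ha ▸ lt_self_pow₀ hp.one_lt one_lt_two)
  have haZ : a ∉ center G := fun h =>
    hap (orderOf_dvd_iff_pow_eq_one.mp (hZ ▸ (center G).orderOf_dvd_natCard h))
  have hZa : zpowers (a ^ p) = center G := zpowers_eq_of_card_prime (hZ ▸ hp) (hpow a) hap
  have hCa : ¬centralizer {a} ≤ zpowers a := fun h => by
    have hle := card_le_of_le h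
    rw [Nat.card_zpowers, ha] at hle
    have hmul := card_mul_index (centralizer {a})
    rw [index_centralizer_singleton hG hZ haZ] at hmul
    exact hcard.not_ge (hmul ▸ pow_succ p 2 ▸ Nat.mul_le_mul_right p hle)
  obtain ⟨c₀, hc₀, hc₀a⟩ := Set.not_subset.mp hCa
  obtain ⟨c, hc, hcp, hca⟩ := exists_mem_centralizer_pow_eq_one hc₀ hc₀a (hZa ▸ hpow c₀)
  obtain ⟨d, hd, hdc⟩ : ∃ d ∈ centralizer {a}, d ∉ centralizer {c} := by
    by_contra! h
    have hZle : center G ≤ zpowers a := hZa ▸ zpowers_le.mpr (pow_mem (mem_zpowers a) p)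
    exact hca (sup_le le_rfl hZle (mem_zpowers_sup_center_of_centralizer_le hG hZ haZ h))
  exact ⟨c, d, hc, hcp, hd, hdc⟩

theorem index_centralizer_inf_centralizer (hG : ∀ x y : G, ⁅x, y⁆ ∈ center G)
    (hZ : Nat.card (center G) = p) {c d : G} (hdc : d ∉ centralizer {c}) :
    (centralizer {d} ⊓ centralizer {c}).index = p ^ 2 := by
  have hc : c ∉ center G := fun hc =>
    hdc (mem_centralizer_singleton_comm.mp (center_le_centralizer _ hc))
  have hcd : ¬centralizer {c} ≤ centralizer {d} := fun h =>
    hdc (mem_centralizer_singleton_comm.mp (h (mem_centralizer_singleton_iff.mpr rfl)))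
  rw [← relIndex_mul_index inf_le_right, inf_relIndex_right,
    relIndex_centralizer_singleton hG hZ hcd, index_centralizer_singleton hG hZ hc, sq]

theorem centralizer_inf_centralizer_sup_zpowers (hG : ∀ x y : G, ⁅x, y⁆ ∈ center G)
    (hZ : Nat.card (center G) = p) {c d : G} (hdc : d ∉ centralizer {c}) :
    centralizer {d} ⊓ centralizer {c} ⊔ zpowers c = centralizer {c} := by
  have hcd : ¬centralizer {c} ≤ centralizer {d} := fun h =>
    hdc (mem_centralizer_singleton_comm.mp (h (mem_centralizer_singleton_iff.mpr rfl)))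
  refine eq_of_relIndex_prime le_sup_left
    (sup_le inf_le_right (zpowers_le.mpr (mem_centralizer_singleton_iff.mpr rfl)))
    (by rw [inf_relIndex_right, relIndex_centralizer_singleton hG hZ hcd]; exact Fact.out) ?_
  exact fun h => hdc (mem_centralizer_singleton_comm.mp (h (mem_sup_right (mem_zpowers c))).1)

end CentralCommutators

theorem extraspecial_exponent_p_sq_exists_subgroups_general
    (p r : ℕ) (hp : p.Prime) (hr : 2 ≤ r)
    (G : Type*) [Group G] [Fintype G]
    (hfc : frattini G = commutator G)
    (hcz : commutator G = Subgroup.center G)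
    (hzcard : Nat.card (Subgroup.center G) = p)
    (hcard : Fintype.card G = p ^ (1 + 2 * r))
    (hexp : Monoid.exponent G = p ^ 2) :
    ∃ H C : Subgroup G,
      Nat.card H = p ^ (2 * r - 1) ∧
      Monoid.exponent ↥H = p ^ 2 ∧
      Nat.card C = p ∧
      H ⊓ C = ⊥ ∧
      (∀ h ∈ H, ∀ c ∈ C, Commute h c) ∧
      (H ⊔ C).index = p := by
  have : Fact p.Prime := ⟨hp⟩
  rw [← Nat.card_eq_fintype_card] at hcard
  have hG : ∀ x y : G, ⁅x, y⁆ ∈ center G := fun x y =>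
    hcz ▸ commutator_mem_commutator (mem_top x) (mem_top y)
  have hpow : ∀ x : G, x ^ p ∈ center G := fun x =>
    hcz ▸ hfc ▸ (IsPGroup.of_card hcard).pow_mem_frattini x
  obtain ⟨a, ha⟩ := Monoid.exists_orderOf_eq_prime_pow hp hexp
  obtain ⟨c, d, hc, hcp, hd, hdc⟩ := exists_noncommuting_pair_mem_centralizer hG hzcard hpow ha
    (hcard ▸ Nat.pow_lt_pow_right hp.one_lt (by omega))
  have hco : orderOf c = p :=
    orderOf_eq_prime hcp fun hc1 => hdc (by simp [hc1, mem_centralizer_singleton_iff])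
  have haH : a ∈ centralizer {d} ⊓ centralizer {c} :=
    ⟨mem_centralizer_singleton_comm.mp hd, mem_centralizer_singleton_comm.mp hc⟩
  refine ⟨centralizer {d} ⊓ centralizer {c}, zpowers c, ?_,
    (exponent_eq_of_orderOf_eq haH (ha.trans hexp.symm)).trans hexp, hco ▸ Nat.card_zpowers c,
    inf_zpowers_eq_bot (hco ▸ hp) fun h => hdc (mem_centralizer_singleton_comm.mp h.1), ?_, ?_⟩
  · have hmul := card_mul_index (centralizer {d} ⊓ centralizer {c})
    rw [index_centralizer_inf_centralizer hG hzcard hdc, hcard,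
      show 1 + 2 * r = 2 * r - 1 + 2 by omega, pow_add] at hmul
    exact Nat.eq_of_mul_eq_mul_right (pow_pos hp.pos 2) hmul
  · rintro h hh x hx
    obtain ⟨k, rfl⟩ := mem_zpowers_iff.mp hx
    exact Commute.zpow_right (mem_centralizer_singleton_iff.mp hh.2) k
  · rw [centralizer_inf_centralizer_sup_zpowers hG hzcard hdc,
      index_centralizer_singleton hG hzcard
        fun h => hdc (mem_centralizer_singleton_comm.mp (center_le_centralizer _ h))]

/-- If p is an odd prime, r ≥ 2, and G is an extraspecial p-group of order
p^{1+2r} and exponent p², then there are subgroups H and C with |H| = p^{2r-1},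
H of exponent p², |C| = p, H ∩ C = 1, elements of H and C commuting, and the
subgroup H·C generated by H and C of index p in G. -/
theorem extraspecial_exponent_p_sq_exists_subgroups
    (p r : ℕ) (hp : p.Prime) (hodd : Odd p) (hr : 2 ≤ r)
    (G : Type*) [Group G] [Fintype G]
    (hfc : frattini G = commutator G)
    (hcz : commutator G = Subgroup.center G)
    (hzcard : Nat.card (Subgroup.center G) = p)
    (hcard : Fintype.card G = p ^ (1 + 2 * r))
    (hexp : Monoid.exponent G = p ^ 2) :
    ∃ H C : Subgroup G,
      Nat.card H = p ^ (2 * r - 1) ∧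
      Monoid.exponent ↥H = p ^ 2 ∧
      Nat.card C = p ∧
      H ⊓ C = ⊥ ∧
      (∀ h ∈ H, ∀ c ∈ C, Commute h c) ∧
      (H ⊔ C).index = p :=
  extraspecial_exponent_p_sq_exists_subgroups_general p r hp hr G hfc hcz hzcard hcard hexp
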